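/- Conversely, every behaviour of the simple protocol semantics arises as the slot-i projection of some slot-replicated behaviour in which all slots other than i stutter; hence for all I and i ∈ I the slot-i projections of slot-replicated behaviours coincide exactly with the simple-semantics behaviours. -/

import Mathlib

namespace PaxosNet

/-- Messages of a protocol: a source node, a destination node, an `active`
flag (set on sending, cleared on receipt) and a content. -/
structure Msg (C : Type*) where
  src : ℕ
  dst : ℕ
  active : Bool
  content : C

/-- An abstract distributed protocol `⟨Δ, M, S_int, S_rcv, S_snd⟩` with a set
of initial local states, an internal step relation, a receive relation and a
send relation. -/
structure Protocol (Δ C : Type*) where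
  init : Set Δ
  sint : Δ → Δ → Prop
  srcv : Δ → Msg C → Δ → Prop
  ssnd : Δ → Δ → Set (Msg C) → Prop

variable {Δ C I : Type*}

def deact (m : Msg C) : Msg C := { m with active := false }

/-- A configuration: a global state assigning local states to nodes, together
with a "message soup". -/
abbrev Conf (Δ C : Type*) := (ℕ → Δ) × Set (Msg C)

/-- The simple protocol-aware network semantics: internal steps, send steps
(adding the emitted messages to the soup) and receive steps (consuming an
active message, deactivating it, and updating the destination node). -/
inductive SimpleStep (p : Protocol Δ C) : Conf Δ C → Conf Δ C → Prop
  | int (σ : ℕ → Δ) (M : Set (Msg C)) (n : ℕ) (δ' : Δ) :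
      p.sint (σ n) δ' →
      SimpleStep p (σ, M) (Function.update σ n δ', M)
  | send (σ : ℕ → Δ) (M : Set (Msg C)) (n : ℕ) (δ' : Δ) (ms : Set (Msg C)) :
      p.ssnd (σ n) δ' ms →
      SimpleStep p (σ, M) (Function.update σ n δ', M ∪ ms)
  | recv (σ : ℕ → Δ) (M : Set (Msg C)) (m : Msg C) (δ' : Δ) :
      m ∈ M → m.active = true →
      p.srcv (σ m.dst) m δ' →
      SimpleStep p (σ, M) (Function.update σ m.dst δ', (M \ {m}) ∪ {deact m})

/-- Behaviours of a step relation: the prefix-closed set of finite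
configuration traces that start in an initial configuration and are closed
under steps. -/
def Beh {α : Type*} (step : α → α → Prop) (initC : α → Prop) : Set (List α) :=
  { t | List.Chain' step t ∧ ∀ c ∈ t.head?, initC c }

def SimpleInit (p : Protocol Δ C) : Conf Δ C → Prop :=
  fun c => ∀ n, c.1 n ∈ p.init

/-! ### Slot-replicating semantics -/

/-- Slotted messages: messages enhanced with a `slot` field from `I`. -/
abbrev SMsg (C I : Type*) := Msg (I × C)

/-- Slot-replicated configurations: each node holds an `I`-indexed array of
local states. -/
abbrev SConf (Δ C I : Type*) := (ℕ → I → Δ) × Set (SMsg C I)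

def slotOf (m : SMsg C I) : I := m.content.1

/-- Erase the slot field of a slotted message. -/
def core (m : SMsg C I) : Msg C := ⟨m.src, m.dst, m.active, m.content.2⟩

/-- Tag a message with a slot. -/
def withSlot (i : I) (m : Msg C) : SMsg C I := ⟨m.src, m.dst, m.active, (i, m.content)⟩

variable [DecidableEq I]

def updSlot (σ : ℕ → I → Δ) (n : ℕ) (i : I) (δ' : Δ) : ℕ → I → Δ :=
  Function.update σ n (Function.update (σ n) i δ')

/-- The slot-replicating network semantics: each rule acts on the component of
a single slot, and messages are dispatched according to their slot field. -/
inductive SRStep (p : Protocol Δ C) : SConf Δ C I → SConf Δ C I → Prop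
  | int (σ : ℕ → I → Δ) (M : Set (SMsg C I)) (n : ℕ) (i : I) (δ' : Δ) :
      p.sint (σ n i) δ' →
      SRStep p (σ, M) (updSlot σ n i δ', M)
  | send (σ : ℕ → I → Δ) (M : Set (SMsg C I)) (n : ℕ) (i : I) (δ' : Δ)
      (ms : Set (Msg C)) :
      p.ssnd (σ n i) δ' ms →
      SRStep p (σ, M) (updSlot σ n i δ', M ∪ (withSlot i '' ms))
  | recv (σ : ℕ → I → Δ) (M : Set (SMsg C I)) (m : SMsg C I) (δ' : Δ) :
      m ∈ M → m.active = true →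
      p.srcv (σ m.dst (slotOf m)) (core m) δ' →
      SRStep p (σ, M)
        (updSlot σ m.dst (slotOf m) δ', (M \ {m}) ∪ {deact m})

def SRInit (p : Protocol Δ C) : SConf Δ C I → Prop :=
  fun c => ∀ (n : ℕ) (i : I), c.1 n i ∈ p.init

/-- Projection of a slot-replicated configuration onto slot `i`: restrict each
node's state to the `i`-th component and the soup to the messages with slot
field `i` (with their slot field erased). -/
def projConf (i : I) (c : SConf Δ C I) : Conf Δ C :=
  (fun n => c.1 n i, core '' { m ∈ c.2 | slotOf m = i })

/-!
Seen through slot `i`, a step of slot `i` is the corresponding simple step and a step of any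
other slot changes nothing, a stutter that the reflexive internal step absorbs; the slot-`i` soup
is just the preimage of the slotted soup under `withSlot i`. Conversely, a simple trace is placed
into slot `i` with every other slot frozen at the initial states, and projecting recovers it.
-/

section Projection

variable {Δ C I : Type*}

@[simp] lemma slotOf_withSlot (i : I) (m : Msg C) : slotOf (withSlot i m) = i := rfl

@[simp] lemma core_withSlot (i : I) (m : Msg C) : core (withSlot i m) = m := rfl

@[simp] lemma withSlot_slotOf_core (m : SMsg C I) : withSlot (slotOf m) (core m) = m := rfl

lemma deact_withSlot (i : I) (m : Msg C) : deact (withSlot i m) = withSlot i (deact m) := rfl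

lemma withSlot_injective (i : I) : Function.Injective (withSlot (C := C) i) :=
  Function.LeftInverse.injective (core_withSlot i)

lemma exists_eq_withSlot {m : SMsg C I} {i : I} (h : slotOf m = i) :
    ∃ x, m = withSlot i x :=
  ⟨core m, by rw [← h, withSlot_slotOf_core]⟩

lemma preimage_withSlot_image_of_ne {i j : I} (hj : j ≠ i) (ms : Set (Msg C)) :
    withSlot i ⁻¹' (withSlot j '' ms) = ∅ :=
  Set.eq_empty_of_forall_notMem fun _ ⟨_, _, hx⟩ => hj (congrArg slotOf hx)

lemma preimage_withSlot_singleton_of_ne {i : I} {m : SMsg C I} (hm : slotOf m ≠ i) :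
    withSlot i ⁻¹' {m} = ∅ :=
  Set.eq_empty_of_forall_notMem fun _ hx => hm (congrArg slotOf hx).symm

lemma projConf_eq (i : I) (c : SConf Δ C I) :
    projConf i c = (fun n => c.1 n i, withSlot i ⁻¹' c.2) := by
  refine Prod.ext rfl (Set.ext fun x => ⟨?_, fun hx => ⟨withSlot i x, ⟨hx, rfl⟩, rfl⟩⟩)
  rintro ⟨m, ⟨hm, rfl⟩, rfl⟩
  simpa using hm

variable [DecidableEq I]

lemma updSlot_apply_self (σ : ℕ → I → Δ) (n₀ : ℕ) (i : I) (δ' : Δ) :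
    (fun n => updSlot σ n₀ i δ' n i) = Function.update (fun n => σ n i) n₀ δ' := by
  funext n
  by_cases hn : n = n₀ <;> simp [updSlot, hn]

lemma updSlot_apply_of_ne (σ : ℕ → I → Δ) (n₀ : ℕ) {i j : I} (δ' : Δ) (hj : j ≠ i) :
    (fun n => updSlot σ n₀ j δ' n i) = fun n => σ n i := by
  funext n
  by_cases hn : n = n₀ <;> simp [updSlot, hn, Ne.symm hj]

lemma SRStep.projConf_eq_or_simpleStep {p : Protocol Δ C} {c c' : SConf Δ C I}
    (h : SRStep p c c') (i : I) :
    projConf i c' = projConf i c ∨ SimpleStep p (projConf i c) (projConf i c') := by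
  simp only [projConf_eq]
  cases h with
  | int σ M n j δ' h =>
    by_cases hj : j = i
    · subst hj
      right
      rw [updSlot_apply_self]
      exact SimpleStep.int _ _ n δ' h
    · left
      rw [updSlot_apply_of_ne σ n δ' hj]
  | send σ M n j δ' ms h =>
    by_cases hj : j = i
    · subst hj
      right
      rw [updSlot_apply_self, Set.preimage_union, (withSlot_injective j).preimage_image]
      exact SimpleStep.send _ _ n δ' ms h
    · left
      rw [updSlot_apply_of_ne σ n δ' hj, Set.preimage_union,
        preimage_withSlot_image_of_ne hj, Set.union_empty]
  | recv σ M m δ' hm hact h =>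
    by_cases hj : slotOf m = i
    · obtain ⟨x, rfl⟩ := exists_eq_withSlot hj
      right
      rw [slotOf_withSlot, updSlot_apply_self, deact_withSlot, Set.preimage_union,
        Set.preimage_sdiff, ← Set.image_singleton, ← Set.image_singleton,
        (withSlot_injective i).preimage_image, (withSlot_injective i).preimage_image]
      exact SimpleStep.recv _ _ x δ' hm hact h
    · left
      rw [updSlot_apply_of_ne σ _ δ' hj, Set.preimage_union, Set.preimage_sdiff,
        preimage_withSlot_singleton_of_ne hj, preimage_withSlot_singleton_of_ne (m := deact m) hj,
        Set.sdiff_empty, Set.union_empty]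

lemma simpleStep_self {p : Protocol Δ C} (hid : ∀ δ, p.sint δ δ) (c : Conf Δ C) :
    SimpleStep p c c := by
  simpa using SimpleStep.int (p := p) c.1 c.2 0 (c.1 0) (hid _)

lemma SRStep.simpleStep_projConf {p : Protocol Δ C} (hid : ∀ δ, p.sint δ δ)
    {c c' : SConf Δ C I} (h : SRStep p c c') (i : I) :
    SimpleStep p (projConf i c) (projConf i c') :=
  (h.projConf_eq_or_simpleStep i).elim (fun he => he ▸ simpleStep_self hid _) id

end Projection

def liftConf (i : I) (σ₀ : ℕ → Δ) (c : Conf Δ C) : SConf Δ C I :=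
  (fun n j => if j = i then c.1 n else σ₀ n, withSlot i '' c.2)

lemma projConf_liftConf (i : I) (σ₀ : ℕ → Δ) (c : Conf Δ C) :
    projConf i (liftConf i σ₀ c) = c := by
  rw [projConf_eq, liftConf, (withSlot_injective i).preimage_image]
  simp

lemma updSlot_liftConf (i : I) (σ₀ : ℕ → Δ) (c : Conf Δ C) (n : ℕ) (δ' : Δ) (M : Set (Msg C)) :
    updSlot (liftConf i σ₀ c).1 n i δ' = (liftConf i σ₀ (Function.update c.1 n δ', M)).1 := by
  funext n' j
  by_cases hn : n' = n <;> by_cases hj : j = i <;> simp [liftConf, updSlot, hn, hj]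

lemma SimpleStep.srStep_liftConf {p : Protocol Δ C} {c c' : Conf Δ C} (h : SimpleStep p c c')
    (i : I) (σ₀ : ℕ → Δ) :
    SRStep p (liftConf i σ₀ c) (liftConf i σ₀ c') := by
  cases h with
  | int σ M n δ' h =>
    have := SRStep.int (liftConf i σ₀ (σ, M)).1 (withSlot i '' M) n i δ' (by simpa [liftConf])
    rwa [updSlot_liftConf (M := M)] at this
  | send σ M n δ' ms h =>
    have := SRStep.send (liftConf i σ₀ (σ, M)).1 (withSlot i '' M) n i δ' ms
      (by simpa [liftConf])
    rwa [updSlot_liftConf (M := M ∪ ms), ← Set.image_union] at this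
  | recv σ M m δ' hm hact h =>
    have := SRStep.recv (p := p) (liftConf i σ₀ (σ, M)).1 (withSlot i '' M) (withSlot i m) δ'
      ⟨m, hm, rfl⟩ hact (by simpa [liftConf])
    have hsoup : withSlot i '' (M \ {m} ∪ {deact m})
        = withSlot i '' M \ {withSlot i m} ∪ {deact (withSlot i m)} := by
      rw [Set.image_union, Set.image_sdiff (withSlot_injective i), Set.image_singleton,
        Set.image_singleton, deact_withSlot]
    rwa [slotOf_withSlot, updSlot_liftConf (M := M \ {m} ∪ {deact m}), ← hsoup] at this

lemma srInit_liftConf {p : Protocol Δ C} (i : I) {σ₀ : ℕ → Δ} (hσ₀ : ∀ n, σ₀ n ∈ p.init)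
    {c : Conf Δ C} (hc : SimpleInit p c) : SRInit p (liftConf i σ₀ c) := by
  intro n j
  by_cases hj : j = i
  · simpa [liftConf, hj] using hc n
  · simpa [liftConf, hj] using hσ₀ n

lemma map_mem_beh {α β : Type*} {step : α → α → Prop} {initC : α → Prop}
    {step' : β → β → Prop} {initC' : β → Prop} {f : α → β}
    (hstep : ∀ a b, step a b → step' (f a) (f b)) (hinit : ∀ c, initC c → initC' (f c))
    {t : List α} (ht : t ∈ Beh step initC) : t.map f ∈ Beh step' initC' := by
  refine ⟨List.isChain_map_of_isChain f hstep ht.1, fun c hc => ?_⟩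
  obtain ⟨a, ha, rfl⟩ := Option.map_eq_some_iff.1 (List.head?_map ▸ hc)
  exact hinit a (ht.2 a ha)

/-- **Slot-replicating simulation** (Lemma 2): for any index set `I` and any
slot `i ∈ I`, the slot-`i` projections of the behaviours of the
slot-replicating semantics coincide exactly with the behaviours of the simple
protocol semantics; in particular every simple behaviour arises as the
projection of some slot-replicated behaviour in which all other slots
stutter. -/
theorem slot_projection_eq_simple_behaviours
    (p : Protocol Δ C) (hid : ∀ δ, p.sint δ δ) (i : I) :
    (fun t => t.map (projConf i)) '' Beh (SRStep (I := I) p) (SRInit p)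
      = Beh (SimpleStep p) (SimpleInit p) := by
  ext t
  refine ⟨?_, fun ht => ?_⟩
  · rintro ⟨s, hs, rfl⟩
    exact map_mem_beh (fun _ _ h => h.simpleStep_projConf hid i) (fun c hc n => hc n i) hs
  · cases t with
    | nil => exact ⟨[], ⟨List.isChain_nil, by simp⟩, rfl⟩
    | cons c₀ r =>
      refine ⟨(c₀ :: r).map (liftConf i c₀.1),
        map_mem_beh (fun _ _ h => h.srStep_liftConf i c₀.1)
          (fun _ hc => srInit_liftConf i (ht.2 c₀ rfl) hc) ht, ?_⟩
      simp only [List.map_map, Function.comp_def, projConf_liftConf, List.map_id']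

end PaxosNet
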